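/- arXiv:2512.09368 — 2 statements merged into one kernel-verified Lean document; each statement's English description precedes it below -/
import Mathlib

section
/- Suppose f : S × A × ℝ → ℝ is, for each fixed (s,a), strictly monotone and surjective onto ℝ in its noise argument. Then the counterfactual outcome is identifiable: there exists a function g : S × A × ℝ × A → ℝ such that for all s, a, u, a_cf, if s' = f(s, a, u), then g(s, a, s', a_cf) = f(s, a_cf, u). In particular, the counterfactual outcome f(s, a_cf, u) is determined by the observed triple (s, a, s') and the counterfactual action a_cf, without observing u. -/
/-- Counterfactual identifiability: if the structural equation `f` is strictly
increasing and surjective in its noise argument for each `(s, a)`, then there is a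
function `g` computing the counterfactual outcome `f s a_cf u` from the observed
triple `(s, a, s')` and the counterfactual action `a_cf`. -/
theorem stmt_1 {S A : Type*} (f : S → A → ℝ → ℝ)
    (hmono : ∀ s a, StrictMono (f s a))
    (hsurj : ∀ s a, Function.Surjective (f s a)) :
    ∃ g : S → A → ℝ → A → ℝ,
      ∀ s a u (a_cf : A) (s' : ℝ), s' = f s a u → g s a s' a_cf = f s a_cf u := by
  refine ⟨fun s a s' a_cf => f s a_cf (Classical.choose (hsurj s a s')), ?_⟩
  intro s a u a_cf s' hs'
  have h := Classical.choose_spec (hsurj s a s')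
  have : Classical.choose (hsurj s a s') = u := (hmono s a).injective (h.trans hs')
  exact congrArg (f s a_cf) this
end

section
/- Consider two structural equations S' = f₁(s, a, u_s) and R = f₂(s, a, u_r), each strictly increasing and surjective in its noise argument for fixed (s, a). Then the joint counterfactual (S'_{A=a_cf}, R_{A=a_cf}) is identifiable: there is a function h such that whenever s' = f₁(s,a,u_s) and r = f₂(s,a,u_r), we have h(s, a, s', r, a_cf) = (f₁(s, a_cf, u_s), f₂(s, a_cf, u_r)). -/
/-- Joint counterfactual identifiability (paper's Theorem 1): with structural
equations for next state and reward that are strictly increasing and surjective in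
their noises, the joint counterfactual `(f₁ s a_cf u_s, f₂ s a_cf u_r)` is a
function of the observed transition `(s, a, s', r)` and the counterfactual
action `a_cf`. -/
theorem stmt_4 {S A : Type*} (f₁ f₂ : S → A → ℝ → ℝ)
    (hmono₁ : ∀ s a, StrictMono (f₁ s a)) (hsurj₁ : ∀ s a, Function.Surjective (f₁ s a))
    (hmono₂ : ∀ s a, StrictMono (f₂ s a)) (hsurj₂ : ∀ s a, Function.Surjective (f₂ s a)) :
    ∃ h : S → A → ℝ → ℝ → A → ℝ × ℝ,
      ∀ s a u_s u_r (a_cf : A) (s' r : ℝ),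
        s' = f₁ s a u_s → r = f₂ s a u_r →
        h s a s' r a_cf = (f₁ s a_cf u_s, f₂ s a_cf u_r) := by
  refine ⟨fun s a s' r a_cf =>
    (f₁ s a_cf (Classical.choose (hsurj₁ s a s')),
     f₂ s a_cf (Classical.choose (hsurj₂ s a r))), ?_⟩
  intro s a u_s u_r a_cf s' r hs hr
  have h1 : Classical.choose (hsurj₁ s a s') = u_s :=
    (hmono₁ s a).injective (by rw [Classical.choose_spec (hsurj₁ s a s'), hs])
  have h2 : Classical.choose (hsurj₂ s a r) = u_r :=
    (hmono₂ s a).injective (by rw [Classical.choose_spec (hsurj₂ s a r), hr])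
  beta_reduce
  rw [h1, h2]
end
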